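/- (Lemma B.2, with an explicit valid sample size.) Let T : S → A → S be a shared transition function and R_i : S → A → ℝ, i ∈ I, reward functions forming a family of deterministic MDPs with shared transitions over a finite index set I, let D be a probability mass function on I, and let H ≥ 1. Fix a state s ∈ S and h < H, and assume 0 ≤ R_i(s,a) + V*_i(h, T(s,a)) ≤ 1 for all i ∈ I and a ∈ A. Suppose q_a : I → ℝ (for each a ∈ A) satisfies R_i(s,a) + V*_i(h, T(s,a)) ≥ q_a(i) ≥ R_i(s,a) + V*_i(h, T(s,a)) − β for all i, a. Let ε, δ > 0 and let n be a positive integer with n ≥ (2H²/ε²)·log(4·H·|A|/δ). If ω = (ω_1, …, ω_n) is drawn from the n-fold product of D, then with probability at least 1 − δ/H, simultaneously for every a ∈ A: |(1/n)·Σ_{j=1}^n q_a(ω_j) − E_{i~D}[R_i(s,a) + V*_i(h, T(s,a))]| ≤ β + ε/(2H). -/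

import Mathlib

open scoped BigOperators

/-- The `h`-step value of a stationary deterministic policy `π` in the deterministic MDP
with transition function `T` and reward function `R`. -/
noncomputable def detVal {S A : Type*} (T : S → A → S) (R : S → A → ℝ)
    (π : S → A) : ℕ → S → ℝ
  | 0, _ => 0
  | h + 1, s => R s (π s) + detVal T R π h (T s (π s))

/-- The `h`-step optimal value in the deterministic MDP `(T, R)`. -/
noncomputable def detOptVal {S A : Type*} [Fintype A] [Nonempty A]
    (T : S → A → S) (R : S → A → ℝ) : ℕ → S → ℝ
  | 0, _ => 0
  | h + 1, s => ⨆ a : A, (R s a + detOptVal T R h (T s a))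

/-- Expectation of `f : I → ℝ` under the probability mass function `D` on the finite type
`I`: `E_{i~D}[f(i)] = Σ_i D(i)·f(i)`. -/
noncomputable def expectD {I : Type*} [Fintype I] (D : PMF I) (f : I → ℝ) : ℝ :=
  ∑ i : I, (D i).toReal * f i

/-!
Each estimate `q a` lies at most `β` below the optimal Q-value `Q a`, which takes values in
`[0, 1]`, so it suffices that every empirical mean of `Q a` is within `ε / (2H)` of its
expectation. Hoeffding's inequality bounds the failure probability for one action by
`2 exp (-2n (ε / 2H)²)`; the sample size makes `exp (-2n (ε / 2H)²) ≤ δ / (4H|A|)`, and a union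
bound over the actions leaves a failure probability of at most `δ / (2H)`.
-/

open MeasureTheory ProbabilityTheory

section Hoeffding

variable {Ω ι : Type*} [MeasurableSpace Ω] {ν : Measure Ω} [IsProbabilityMeasure ν] [Fintype ι]
  {f : Ω → ℝ} {a b : ℝ}

lemma hasSubgaussianMGF_pi_eval_sub_integral (hf : Measurable f) (hab : ∀ x, f x ∈ Set.Icc a b)
    (j : ι) :
    HasSubgaussianMGF (fun ω : ι → Ω => f (ω j) - ∫ x, f x ∂ν) ((‖b - a‖₊ / 2) ^ 2)
      (Measure.pi fun _ => ν) := by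
  refine HasSubgaussianMGF.of_map (X := fun x => f x - ∫ x, f x ∂ν)
    (measurable_pi_apply j).aemeasurable ?_
  rw [(measurePreserving_eval (fun _ : ι => ν) j).map_eq]
  exact hasSubgaussianMGF_of_mem_Icc hf.aemeasurable (ae_of_all ν hab)

lemma measureReal_pi_le_sum_sub_integral_le (hf : Measurable f) (hab : ∀ x, f x ∈ Set.Icc a b)
    {t : ℝ} (ht : 0 ≤ t) :
    (Measure.pi fun _ : ι => ν).real {ω | t ≤ ∑ j, (f (ω j) - ∫ x, f x ∂ν)}
      ≤ Real.exp (-2 * t ^ 2 / (Fintype.card ι * (b - a) ^ 2)) := by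
  refine (HasSubgaussianMGF.measure_sum_ge_le_of_iIndepFun (s := Finset.univ)
    (iIndepFun_pi (μ := fun _ : ι => ν) (X := fun _ x => f x - ∫ x, f x ∂ν)
      fun _ => (hf.sub_const _).aemeasurable)
    (fun j _ => hasSubgaussianMGF_pi_eval_sub_integral hf hab j) ht).trans_eq ?_
  simp only [Finset.sum_const, Finset.card_univ, nsmul_eq_mul]
  push_cast
  rw [div_pow, Real.norm_eq_abs, sq_abs,
    show (2 : ℝ) * (Fintype.card ι * ((b - a) ^ 2 / 2 ^ 2)) = Fintype.card ι * (b - a) ^ 2 / 2 by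
      ring,
    div_div_eq_mul_div]
  congr 1
  ring

lemma measureReal_pi_le_abs_sum_sub_integral_le (hf : Measurable f)
    (hab : ∀ x, f x ∈ Set.Icc a b) {t : ℝ} (ht : 0 ≤ t) :
    (Measure.pi fun _ : ι => ν).real {ω | t ≤ |∑ j, (f (ω j) - ∫ x, f x ∂ν)|}
      ≤ 2 * Real.exp (-2 * t ^ 2 / (Fintype.card ι * (b - a) ^ 2)) := by
  have hneg : ∀ x, -f x ∈ Set.Icc (-b) (-a) := fun x =>
    ⟨neg_le_neg (hab x).2, neg_le_neg (hab x).1⟩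
  have hsplit : {ω : ι → Ω | t ≤ |∑ j, (f (ω j) - ∫ x, f x ∂ν)|} ⊆
      {ω | t ≤ ∑ j, (f (ω j) - ∫ x, f x ∂ν)} ∪ {ω | t ≤ ∑ j, (-f (ω j) - ∫ x, -f x ∂ν)} := by
    intro ω (hω : t ≤ _)
    have hsum : ∑ j, (-f (ω j) - ∫ x, -f x ∂ν) = -∑ j, (f (ω j) - ∫ x, f x ∂ν) := by
      simp only [integral_neg, ← Finset.sum_neg_distrib]
      exact Finset.sum_congr rfl fun _ _ => by ring
    rcases le_abs'.mp hω with hlow | hup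
    · exact Or.inr (show t ≤ _ by rw [hsum]; linarith)
    · exact Or.inl hup
  calc _ ≤ _ := measureReal_mono hsplit
    _ ≤ _ := measureReal_union_le _ _
    _ ≤ _ := add_le_add (measureReal_pi_le_sum_sub_integral_le hf hab ht)
        (measureReal_pi_le_sum_sub_integral_le hf.neg hneg ht)
    _ = _ := by rw [neg_sub_neg]; ring

lemma measureReal_pi_le_abs_mean_sub_integral_le [Nonempty ι] (hf : Measurable f)
    (hab : ∀ x, f x ∈ Set.Icc a b) {t : ℝ} (ht : 0 ≤ t) :
    (Measure.pi fun _ : ι => ν).real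
        {ω | t ≤ |(1 / Fintype.card ι) * ∑ j, f (ω j) - ∫ x, f x ∂ν|}
      ≤ 2 * Real.exp (-2 * Fintype.card ι * t ^ 2 / (b - a) ^ 2) := by
  have hcard : (0 : ℝ) < Fintype.card ι := by exact_mod_cast Fintype.card_pos
  have hset : {ω : ι → Ω | t ≤ |(1 / Fintype.card ι) * ∑ j, f (ω j) - ∫ x, f x ∂ν|} =
      {ω | Fintype.card ι * t ≤ |∑ j, (f (ω j) - ∫ x, f x ∂ν)|} := by
    ext ω
    have hsum : ∑ j, (f (ω j) - ∫ x, f x ∂ν) =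
        Fintype.card ι * ((1 / Fintype.card ι) * ∑ j, f (ω j) - ∫ x, f x ∂ν) := by
      rw [Finset.sum_sub_distrib, Finset.sum_const, Finset.card_univ, nsmul_eq_mul]
      field_simp
    rw [Set.mem_ofPred_eq, Set.mem_ofPred_eq, hsum, abs_mul, abs_of_pos hcard,
      mul_le_mul_iff_right₀ hcard]
  rw [hset]
  refine (measureReal_pi_le_abs_sum_sub_integral_le hf hab (by positivity)).trans_eq ?_
  congr 2
  field_simp

lemma one_sub_le_measureReal_pi_forall_abs_mean_sub_integral_lt {A : Type*} [Fintype A]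
    [Nonempty ι] {F : A → Ω → ℝ} (hF : ∀ k, Measurable (F k))
    (hab : ∀ k x, F k x ∈ Set.Icc a b) {t : ℝ} (ht : 0 ≤ t) :
    1 - Fintype.card A * (2 * Real.exp (-2 * Fintype.card ι * t ^ 2 / (b - a) ^ 2)) ≤
      (Measure.pi fun _ : ι => ν).real
        {ω | ∀ k, |(1 / Fintype.card ι) * ∑ j, F k (ω j) - ∫ x, F k x ∂ν| < t} := by
  set μ := Measure.pi fun _ : ι => ν
  set G := {ω : ι → Ω | ∀ k, |(1 / Fintype.card ι) * ∑ j, F k (ω j) - ∫ x, F k x ∂ν| < t}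
  have hcompl :
      Gᶜ = ⋃ k, {ω | t ≤ |(1 / Fintype.card ι) * ∑ j, F k (ω j) - ∫ x, F k x ∂ν|} := by
    ext ω
    simp [G]
  have hbad : μ.real Gᶜ ≤
      Fintype.card A * (2 * Real.exp (-2 * Fintype.card ι * t ^ 2 / (b - a) ^ 2)) := by
    rw [hcompl]
    refine (measureReal_iUnion_fintype_le _).trans ?_
    refine (Finset.sum_le_sum fun k _ =>
      measureReal_pi_le_abs_mean_sub_integral_le (hF k) (hab k) ht).trans_eq ?_
    rw [Finset.sum_const, Finset.card_univ, nsmul_eq_mul]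
  have hunion : 1 ≤ μ.real G + μ.real Gᶜ := by
    simpa [Set.union_compl_self] using measureReal_union_le (μ := μ) G Gᶜ
  linarith

end Hoeffding

lemma abs_mean_sub_le_abs_mean_sub_add {ι : Type*} [Fintype ι] [Nonempty ι] {q g : ι → ℝ}
    {β : ℝ} (hqg : ∀ j, q j ≤ g j) (hgq : ∀ j, g j - β ≤ q j) (m : ℝ) :
    |(1 / Fintype.card ι) * ∑ j, q j - m| ≤ |(1 / Fintype.card ι) * ∑ j, g j - m| + β := by
  have hcard : (0 : ℝ) < Fintype.card ι := by exact_mod_cast Fintype.card_pos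
  have hupper : (1 / Fintype.card ι) * ∑ j, q j ≤ (1 / Fintype.card ι) * ∑ j, g j := by
    gcongr with j
    exact hqg j
  have hlower : (1 / Fintype.card ι) * ∑ j, g j - β ≤ (1 / Fintype.card ι) * ∑ j, q j := by
    have hsum := Finset.sum_le_sum fun j (_ : j ∈ Finset.univ) => hgq j
    rw [Finset.sum_sub_distrib, Finset.sum_const, Finset.card_univ, nsmul_eq_mul] at hsum
    calc _ = (1 / Fintype.card ι) * (∑ j, g j - Fintype.card ι * β) := by field_simp
      _ ≤ _ := by gcongr
  calc _ ≤ |(1 / Fintype.card ι) * ∑ j, q j - (1 / Fintype.card ι) * ∑ j, g j| +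
        |(1 / Fintype.card ι) * ∑ j, g j - m| := abs_sub_le _ _ _
    _ ≤ _ := by rw [add_comm]; gcongr; exact abs_le.mpr ⟨by linarith, by linarith⟩

lemma mul_two_mul_exp_le_div_of_log_le {H k n ε δ : ℝ} (hH : 0 < H) (hk : 0 < k) (hε : 0 < ε)
    (hδ : 0 < δ) (hn : 2 * H ^ 2 / ε ^ 2 * Real.log (4 * H * k / δ) ≤ n) :
    k * (2 * Real.exp (-2 * n * (ε / (2 * H)) ^ 2)) ≤ δ / (2 * H) := by
  have hlog : Real.log (4 * H * k / δ) ≤ n * ε ^ 2 / (2 * H ^ 2) := by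
    rw [le_div_iff₀ (by positivity)]
    rw [div_mul_eq_mul_div, div_le_iff₀ (by positivity)] at hn
    linarith
  have hexp : Real.exp (-2 * n * (ε / (2 * H)) ^ 2) ≤ δ / (4 * H * k) := by
    calc _ = Real.exp (-(n * ε ^ 2 / (2 * H ^ 2))) := by congr 1; field_simp
      _ ≤ Real.exp (-Real.log (4 * H * k / δ)) := Real.exp_le_exp.mpr (neg_le_neg hlog)
      _ = δ / (4 * H * k) := by rw [Real.exp_neg, Real.exp_log (by positivity), inv_div]
  calc _ ≤ k * (2 * (δ / (4 * H * k))) := by gcongr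
    _ = δ / (2 * H) := by field_simp; norm_num

lemma expectD_eq_integral {I : Type*} [Fintype I] [MeasurableSpace I] [MeasurableSingletonClass I]
    (D : PMF I) (f : I → ℝ) : expectD D f = ∫ i, f i ∂D.toMeasure := by
  simp [expectD, PMF.integral_eq_sum]

theorem lemma_B2_general
    {S A I : Type*} [Fintype A] [Nonempty A]
    [Fintype I] [MeasurableSpace I] [MeasurableSingletonClass I]
    (T : S → A → S) (R : I → S → A → ℝ)
    (D : PMF I)
    (H : ℕ) (hH : 1 ≤ H)
    (β : ℝ)
    (s : S) (h : ℕ)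
    (hrange : ∀ i : I, ∀ a : A,
      0 ≤ R i s a + detOptVal T (R i) h (T s a) ∧
      R i s a + detOptVal T (R i) h (T s a) ≤ 1)
    (q : A → I → ℝ)
    (hqub : ∀ i : I, ∀ a : A, q a i ≤ R i s a + detOptVal T (R i) h (T s a))
    (hqlb : ∀ i : I, ∀ a : A,
      R i s a + detOptVal T (R i) h (T s a) - β ≤ q a i)
    (ε δ : ℝ) (hε : 0 < ε) (hδ : 0 < δ)
    (n : ℕ) (hn : 0 < n)
    (hnsize : (2 * (H : ℝ) ^ 2 / ε ^ 2) * Real.log (4 * H * (Fintype.card A) / δ)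
      ≤ (n : ℝ)) :
    ENNReal.ofReal (1 - δ / H) ≤
      (MeasureTheory.Measure.pi fun _ : Fin n => D.toMeasure)
        {ω : Fin n → I | ∀ a : A,
          |(1 / (n : ℝ)) * (∑ j : Fin n, q a (ω j)) -
            expectD D (fun i => R i s a + detOptVal T (R i) h (T s a))| ≤
              β + ε / (2 * H)} := by
  have : Nonempty (Fin n) := ⟨⟨0, hn⟩⟩
  have hHpos : (0 : ℝ) < H := by exact_mod_cast hH
  set Q : A → I → ℝ := fun a i => R i s a + detOptVal T (R i) h (T s a)
  have hgood := one_sub_le_measureReal_pi_forall_abs_mean_sub_integral_lt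
    (ν := D.toMeasure) (ι := Fin n) (F := Q) (fun _ => .of_discrete)
    (fun k x => hrange x k) (t := ε / (2 * H)) (by positivity)
  have hsize := mul_two_mul_exp_le_div_of_log_le hHpos (by exact_mod_cast Fintype.card_pos)
    hε hδ hnsize
  have hsub : {ω : Fin n → I | ∀ a, |(1 / (n : ℝ)) * ∑ j, Q a (ω j) - ∫ x, Q a x ∂D.toMeasure|
      < ε / (2 * H)} ⊆ {ω | ∀ a, |(1 / (n : ℝ)) * (∑ j, q a (ω j)) - expectD D (Q a)| ≤
        β + ε / (2 * H)} := by
    intro ω hω a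
    have := abs_mean_sub_le_abs_mean_sub_add (fun j => hqub (ω j) a) (fun j => hqlb (ω j) a)
      (expectD D (Q a))
    simp only [Fintype.card_fin, expectD_eq_integral] at this ⊢
    linarith [hω a]
  rw [← ofReal_measureReal]
  refine ENNReal.ofReal_le_ofReal (le_trans ?_ (measureReal_mono hsub))
  simp only [Fintype.card_fin, sub_zero, one_pow, div_one] at hgood
  have : δ / (2 * H) ≤ δ / H := div_le_div_of_nonneg_left hδ.le hHpos (by linarith)
  linarith

/-- **Lemma B.2** (with an explicit valid sample size).  Drawing `n` i.i.d. samples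
`ω_1, …, ω_n ~ D` with `n ≥ (2H²/ε²)·log(4·H·|A|/δ)`, with probability at least `1 − δ/H`
the empirical averages of the `β`-accurate Q-estimates are simultaneously, for every
action, within `β + ε/(2H)` of the expected optimal Q-values. -/
theorem lemma_B2
    {S A I : Type*} [Fintype S] [Nonempty S] [Fintype A] [Nonempty A]
    [Fintype I] [Nonempty I] [MeasurableSpace I] [MeasurableSingletonClass I]
    (T : S → A → S) (R : I → S → A → ℝ)
    (D : PMF I)
    (H : ℕ) (hH : 1 ≤ H)
    (β : ℝ) (hβ : 0 ≤ β)
    (s : S) (h : ℕ) (hh : h < H)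
    (hrange : ∀ i : I, ∀ a : A,
      0 ≤ R i s a + detOptVal T (R i) h (T s a) ∧
      R i s a + detOptVal T (R i) h (T s a) ≤ 1)
    (q : A → I → ℝ)
    (hqub : ∀ i : I, ∀ a : A, q a i ≤ R i s a + detOptVal T (R i) h (T s a))
    (hqlb : ∀ i : I, ∀ a : A,
      R i s a + detOptVal T (R i) h (T s a) - β ≤ q a i)
    (ε δ : ℝ) (hε : 0 < ε) (hδ : 0 < δ)
    (n : ℕ) (hn : 0 < n)
    (hnsize : (2 * (H : ℝ) ^ 2 / ε ^ 2) * Real.log (4 * H * (Fintype.card A) / δ)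
      ≤ (n : ℝ)) :
    ENNReal.ofReal (1 - δ / H) ≤
      (MeasureTheory.Measure.pi fun _ : Fin n => D.toMeasure)
        {ω : Fin n → I | ∀ a : A,
          |(1 / (n : ℝ)) * (∑ j : Fin n, q a (ω j)) -
            expectD D (fun i => R i s a + detOptVal T (R i) h (T s a))| ≤
              β + ε / (2 * H)} :=
  lemma_B2_general T R D H hH β s h hrange q hqub hqlb ε δ hε hδ n hn hnsize
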